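/- Let d ≥ 1 and 1 < q < 2. There exists a constant c = c(q) such that the following holds: if h : ℝ → [0,∞] is measurable with weak-L² bound N := sup_{λ>0} λ · |{t ∈ ℝ : h(t) > λ}|^{1/2} < ∞ (|·| denoting Lebesgue measure on ℝ), and b : ℝ × ℝ^d → ℝ^d is a measurable vector field with |b(t,x)| ≤ h(t) for a.e. (t,x), then b belongs to the parabolic Morrey class E_q with ‖b‖_{E_q} ≤ c N. -/

import Mathlib

open MeasureTheory Metric Set ENNReal
open scoped Real ENNReal

noncomputable section

abbrev ESp (d : ℕ) := EuclideanSpace ℝ (Fin d)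

/-- The parabolic cylinder `C_r(t,x)`. -/
def pCyl (d : ℕ) (r : ℝ) (z : ℝ × ESp d) : Set (ℝ × ESp d) :=
  {w | z.1 ≤ w.1 ∧ w.1 ≤ z.1 + r ^ 2 ∧ dist w.2 z.2 ≤ r}

/-- The parabolic Morrey norm `‖·‖_{E_q}` of a nonnegative function on `ℝ^{d+1}`. -/
def morreyE (d : ℕ) (q : ℝ) (F : ℝ × ESp d → ℝ≥0∞) : ℝ≥0∞ :=
  ⨆ (r : ℝ) (_ : 0 < r) (z : ℝ × ESp d),
    ENNReal.ofReal r * ((volume (pCyl d r z))⁻¹ * ∫⁻ w in pCyl d r z, F w ^ q) ^ (1 / q)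

private lemma pCyl_eq (d : ℕ) (r : ℝ) (z : ℝ × ESp d) :
    pCyl d r z = Icc z.1 (z.1 + r ^ 2) ×ˢ closedBall z.2 r := by
  ext w
  simp [pCyl, Set.mem_prod, mem_Icc, mem_closedBall, and_assoc]

private lemma measurableSet_pCyl (d : ℕ) (r : ℝ) (z : ℝ × ESp d) :
    MeasurableSet (pCyl d r z) := by
  rw [pCyl_eq]
  exact measurableSet_Icc.prod measurableSet_closedBall

private lemma volume_pCyl (d : ℕ) (r : ℝ) (z : ℝ × ESp d) :
    volume (pCyl d r z) = ENNReal.ofReal (r ^ 2) * volume (closedBall z.2 r) := by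
  rw [pCyl_eq, Measure.volume_eq_prod, Measure.prod_prod, Real.volume_Icc,
    add_sub_cancel_left]

/-- Weak-L² tail bound from the definition of `N`. -/
private lemma tail_bound {h : ℝ → ℝ≥0∞} {N : ℝ≥0∞}
    (hN : N = (⨆ (lam : ℝ) (_ : 0 < lam),
      ENNReal.ofReal lam * (volume {t : ℝ | ENNReal.ofReal lam < h t}) ^ ((1 : ℝ) / 2)))
    {t : ℝ} (ht : 0 < t) :
    volume {s : ℝ | ENNReal.ofReal t < h s} ≤ N ^ (2 : ℝ) * (ENNReal.ofReal t) ^ (-2 : ℝ) := by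
  set μ := volume {s : ℝ | ENNReal.ofReal t < h s} with hμ
  have h1 : ENNReal.ofReal t * μ ^ ((1 : ℝ) / 2) ≤ N := by
    rw [hN]
    exact le_iSup₂ (f := fun lam (_ : 0 < lam) =>
      ENNReal.ofReal lam * (volume {s : ℝ | ENNReal.ofReal lam < h s}) ^ ((1 : ℝ) / 2)) t ht
  have h2 : (ENNReal.ofReal t * μ ^ ((1 : ℝ) / 2)) ^ (2 : ℝ) ≤ N ^ (2 : ℝ) :=
    ENNReal.rpow_le_rpow h1 (by norm_num)
  rw [ENNReal.mul_rpow_of_nonneg _ _ (by norm_num), ← ENNReal.rpow_mul,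
    show (1 : ℝ) / 2 * 2 = 1 by norm_num, ENNReal.rpow_one] at h2
  have ht0 : (ENNReal.ofReal t) ^ (2 : ℝ) ≠ 0 := by
    simp [ENNReal.rpow_eq_zero_iff, ENNReal.ofReal_eq_zero, not_le, ht]
  have httop : (ENNReal.ofReal t) ^ (2 : ℝ) ≠ ⊤ :=
    ENNReal.rpow_ne_top_of_nonneg (by norm_num) ENNReal.ofReal_ne_top
  have h3 : μ ≤ ((ENNReal.ofReal t) ^ (2 : ℝ))⁻¹ * N ^ (2 : ℝ) := by
    calc μ = ((ENNReal.ofReal t) ^ (2 : ℝ))⁻¹ * ((ENNReal.ofReal t) ^ (2 : ℝ) * μ) := by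
          rw [← mul_assoc, ENNReal.inv_mul_cancel ht0 httop, one_mul]
      _ ≤ ((ENNReal.ofReal t) ^ (2 : ℝ))⁻¹ * N ^ (2 : ℝ) := mul_le_mul_right h2 _
  calc μ ≤ ((ENNReal.ofReal t) ^ (2 : ℝ))⁻¹ * N ^ (2 : ℝ) := h3
    _ = N ^ (2 : ℝ) * (ENNReal.ofReal t) ^ (-2 : ℝ) := by
        rw [mul_comm, ENNReal.rpow_neg]

/-- Real algebra identity. -/
private lemma algebra1 (q : ℝ) (hq1 : 1 < q) (hq2 : q < 2) {r Nr : ℝ} (hr : 0 < r)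
    (hNr : 0 ≤ Nr) :
    r ^ 2 * ((Nr / r) ^ q / q) + Nr ^ 2 * ((Nr / r) ^ (q - 2) / (2 - q)) =
      (1 / q + 1 / (2 - q)) * Nr ^ q * r ^ (2 - q) := by
  rcases eq_or_lt_of_le hNr with hNr0 | hNr0
  · rw [← hNr0]
    rw [zero_div, Real.zero_rpow (by linarith), Real.zero_rpow (by linarith)]
    ring
  · have hq0 : (0 : ℝ) < q := by linarith
    have h2q : (0 : ℝ) < 2 - q := by linarith
    have e1 : (Nr / r) ^ q = Nr ^ q / r ^ q := Real.div_rpow hNr hr.le q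
    have e2 : (Nr / r) ^ (q - 2) = Nr ^ (q - 2) / r ^ (q - 2) :=
      Real.div_rpow hNr hr.le (q - 2)
    have e3 : r ^ (2 - q) = r ^ (2 : ℝ) / r ^ q := by
      rw [← Real.rpow_sub hr]
    have e4 : Nr ^ (2 : ℝ) * Nr ^ (q - 2) = Nr ^ q := by
      rw [← Real.rpow_add hNr0]; ring_nf
    have e5 : r ^ (2 : ℝ) = r ^ 2 := by
      rw [show (2 : ℝ) = ((2 : ℕ) : ℝ) by norm_num, Real.rpow_natCast]
    have e6 : Nr ^ (2 : ℝ) = Nr ^ 2 := by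
      rw [show (2 : ℝ) = ((2 : ℕ) : ℝ) by norm_num, Real.rpow_natCast]
    have e7 : r ^ (q - 2) = r ^ q / r ^ (2 : ℝ) := by
      rw [← Real.rpow_sub hr]
    have hrq : r ^ q ≠ 0 := (Real.rpow_pos_of_pos hr q).ne'
    have hr2 : r ^ (2 : ℝ) ≠ 0 := (Real.rpow_pos_of_pos hr 2).ne'
    rw [e1, e2, e3, ← e4, e6, e7, ← e5] at *
    field_simp

/-- Key one-dimensional integral estimate. -/
private lemma key_integral (q : ℝ) (hq1 : 1 < q) (hq2 : q < 2) {r : ℝ} (hr : 0 < r)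
    {N : ℝ≥0∞} (hNtop : N ≠ ⊤) :
    ∫⁻ t in Ioi (0 : ℝ),
        min (ENNReal.ofReal (r ^ 2)) (N ^ (2 : ℝ) * (ENNReal.ofReal t) ^ (-2 : ℝ)) *
          ENNReal.ofReal (t ^ (q - 1))
      ≤ ENNReal.ofReal ((1 / q + 1 / (2 - q)) * N.toReal ^ q * r ^ (2 - q)) := by
  have hq0 : (0 : ℝ) < q := by linarith
  have h2q : (0 : ℝ) < 2 - q := by linarith
  rcases eq_or_ne N 0 with hN0 | hN0
  · have : ∀ t : ℝ, min (ENNReal.ofReal (r ^ 2)) (N ^ (2 : ℝ) * (ENNReal.ofReal t) ^ (-2 : ℝ)) *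
        ENNReal.ofReal (t ^ (q - 1)) = 0 := by
      intro t
      rw [hN0, ENNReal.zero_rpow_of_pos (by norm_num), zero_mul, min_eq_right zero_le,
        zero_mul]
    simp only [this, lintegral_zero]
    exact zero_le
  · -- N ≠ 0, N ≠ ⊤
    set Nr : ℝ := N.toReal with hNr
    have hNr0 : 0 < Nr := ENNReal.toReal_pos hN0 hNtop
    set lam0 : ℝ := Nr / r with hlam0
    have hlam0pos : 0 < lam0 := div_pos hNr0 hr
    have hNrw : N = ENNReal.ofReal Nr := (ENNReal.ofReal_toReal hNtop).symm
    rw [← Ioc_union_Ioi_eq_Ioi hlam0pos.le,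
      lintegral_union measurableSet_Ioi (Ioc_disjoint_Ioi le_rfl)]
    have bound1 : ∫⁻ t in Ioc (0 : ℝ) lam0,
        min (ENNReal.ofReal (r ^ 2)) (N ^ (2 : ℝ) * (ENNReal.ofReal t) ^ (-2 : ℝ)) *
          ENNReal.ofReal (t ^ (q - 1))
        ≤ ENNReal.ofReal (r ^ 2 * (lam0 ^ q / q)) := by
      have step1 : ∫⁻ t in Ioc (0 : ℝ) lam0,
          min (ENNReal.ofReal (r ^ 2)) (N ^ (2 : ℝ) * (ENNReal.ofReal t) ^ (-2 : ℝ)) *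
            ENNReal.ofReal (t ^ (q - 1))
          ≤ ∫⁻ t in Ioc (0 : ℝ) lam0, ENNReal.ofReal (r ^ 2) * ENNReal.ofReal (t ^ (q - 1)) :=
        lintegral_mono fun t => mul_le_mul_left (min_le_left _ _) _
      have step2 : ∫⁻ t in Ioc (0 : ℝ) lam0, ENNReal.ofReal (t ^ (q - 1)) =
          ENNReal.ofReal (lam0 ^ q / q) := by
        have hint : IntegrableOn (fun t : ℝ => t ^ (q - 1)) (Ioc 0 lam0) := by
          rw [← intervalIntegrable_iff_integrableOn_Ioc_of_le hlam0pos.le]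
          exact intervalIntegral.intervalIntegrable_rpow' (by linarith)
        have hnn : 0 ≤ᵐ[volume.restrict (Ioc (0 : ℝ) lam0)] fun t : ℝ => t ^ (q - 1) := by
          filter_upwards [ae_restrict_mem measurableSet_Ioc] with t ht
          exact Real.rpow_nonneg ht.1.le _
        rw [← ofReal_integral_eq_lintegral_ofReal hint hnn]
        congr 1
        rw [← intervalIntegral.integral_of_le hlam0pos.le,
          integral_rpow (Or.inl (by linarith))]
        rw [sub_add_cancel, Real.zero_rpow hq0.ne', sub_zero]
      calc _ ≤ ∫⁻ t in Ioc (0 : ℝ) lam0,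
            ENNReal.ofReal (r ^ 2) * ENNReal.ofReal (t ^ (q - 1)) := step1
        _ = ENNReal.ofReal (r ^ 2) * ∫⁻ t in Ioc (0 : ℝ) lam0, ENNReal.ofReal (t ^ (q - 1)) :=
            lintegral_const_mul' _ _ ENNReal.ofReal_ne_top
        _ = ENNReal.ofReal (r ^ 2) * ENNReal.ofReal (lam0 ^ q / q) := by rw [step2]
        _ = ENNReal.ofReal (r ^ 2 * (lam0 ^ q / q)) := (ENNReal.ofReal_mul (by positivity)).symm
    have bound2 : ∫⁻ t in Ioi lam0,
        min (ENNReal.ofReal (r ^ 2)) (N ^ (2 : ℝ) * (ENNReal.ofReal t) ^ (-2 : ℝ)) *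
          ENNReal.ofReal (t ^ (q - 1))
        ≤ ENNReal.ofReal (Nr ^ 2 * (lam0 ^ (q - 2) / (2 - q))) := by
      have step1 : ∫⁻ t in Ioi lam0,
          min (ENNReal.ofReal (r ^ 2)) (N ^ (2 : ℝ) * (ENNReal.ofReal t) ^ (-2 : ℝ)) *
            ENNReal.ofReal (t ^ (q - 1))
          ≤ ∫⁻ t in Ioi lam0, ENNReal.ofReal (Nr ^ 2) * ENNReal.ofReal (t ^ (q - 3)) := by
        refine lintegral_mono_ae ?_
        filter_upwards [ae_restrict_mem measurableSet_Ioi] with t ht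
        have ht0 : 0 < t := lt_trans hlam0pos ht
        have hmin : min (ENNReal.ofReal (r ^ 2)) (N ^ (2 : ℝ) * (ENNReal.ofReal t) ^ (-2 : ℝ))
            ≤ ENNReal.ofReal (Nr ^ 2) * ENNReal.ofReal (t ^ (-2 : ℝ)) := by
          refine le_trans (min_le_right _ _) ?_
          rw [hNrw, ENNReal.ofReal_rpow_of_pos hNr0, ENNReal.ofReal_rpow_of_pos ht0]
          rw [show Nr ^ (2 : ℝ) = Nr ^ 2 by
            rw [show (2 : ℝ) = ((2 : ℕ) : ℝ) by norm_num, Real.rpow_natCast]]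
        calc min (ENNReal.ofReal (r ^ 2)) (N ^ (2 : ℝ) * (ENNReal.ofReal t) ^ (-2 : ℝ)) *
              ENNReal.ofReal (t ^ (q - 1))
            ≤ ENNReal.ofReal (Nr ^ 2) * ENNReal.ofReal (t ^ (-2 : ℝ)) *
              ENNReal.ofReal (t ^ (q - 1)) := mul_le_mul_left hmin _
          _ = ENNReal.ofReal (Nr ^ 2) * ENNReal.ofReal (t ^ (q - 3)) := by
              rw [mul_assoc, ← ENNReal.ofReal_mul (by positivity), ← Real.rpow_add ht0,
                show (-2 : ℝ) + (q - 1) = q - 3 by ring]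
      have step2 : ∫⁻ t in Ioi lam0, ENNReal.ofReal (t ^ (q - 3)) =
          ENNReal.ofReal (lam0 ^ (q - 2) / (2 - q)) := by
        have hint : IntegrableOn (fun t : ℝ => t ^ (q - 3)) (Ioi lam0) :=
          integrableOn_Ioi_rpow_of_lt (by linarith) hlam0pos
        have hnn : 0 ≤ᵐ[volume.restrict (Ioi lam0)] fun t : ℝ => t ^ (q - 3) := by
          filter_upwards [ae_restrict_mem measurableSet_Ioi] with t ht
          exact Real.rpow_nonneg (le_trans hlam0pos.le (le_of_lt ht)) _
        rw [← ofReal_integral_eq_lintegral_ofReal hint hnn]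
        congr 1
        rw [integral_Ioi_rpow_of_lt (by linarith) hlam0pos]
        rw [show q - 3 + 1 = q - 2 by ring]
        rw [div_eq_div_iff (by linarith) (by linarith)]
        ring
      calc _ ≤ ∫⁻ t in Ioi lam0, ENNReal.ofReal (Nr ^ 2) * ENNReal.ofReal (t ^ (q - 3)) := step1
        _ = ENNReal.ofReal (Nr ^ 2) * ∫⁻ t in Ioi lam0, ENNReal.ofReal (t ^ (q - 3)) :=
            lintegral_const_mul' _ _ ENNReal.ofReal_ne_top
        _ = ENNReal.ofReal (Nr ^ 2) * ENNReal.ofReal (lam0 ^ (q - 2) / (2 - q)) := by rw [step2]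
        _ = ENNReal.ofReal (Nr ^ 2 * (lam0 ^ (q - 2) / (2 - q))) :=
            (ENNReal.ofReal_mul (by positivity)).symm
    calc _ ≤ ENNReal.ofReal (r ^ 2 * (lam0 ^ q / q)) +
          ENNReal.ofReal (Nr ^ 2 * (lam0 ^ (q - 2) / (2 - q))) := add_le_add bound1 bound2
      _ = ENNReal.ofReal (r ^ 2 * (lam0 ^ q / q) + Nr ^ 2 * (lam0 ^ (q - 2) / (2 - q))) :=
          (ENNReal.ofReal_add (by positivity) (by positivity)).symm
      _ = ENNReal.ofReal ((1 / q + 1 / (2 - q)) * Nr ^ q * r ^ (2 - q)) := by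
          rw [algebra1 q hq1 hq2 hr hNr0.le]

/-- Main cylinder estimate. -/
private lemma cylinder_bound (q : ℝ) (hq1 : 1 < q) (hq2 : q < 2) (d : ℕ)
    (h : ℝ → ℝ≥0∞) (b : ℝ × ESp d → ESp d) (N : ℝ≥0∞)
    (hN : N = (⨆ (lam : ℝ) (_ : 0 < lam),
      ENNReal.ofReal lam * (volume {t : ℝ | ENNReal.ofReal lam < h t}) ^ ((1 : ℝ) / 2)))
    (hNtop : N ≠ ⊤) (hmb : Measurable b)
    (hab : ∀ᵐ z : ℝ × ESp d, (‖b z‖₊ : ℝ≥0∞) ≤ h z.1)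
    {r : ℝ} (hr : 0 < r) (z : ℝ × ESp d) :
    ∫⁻ w in pCyl d r z, ENNReal.ofReal (‖b w‖ ^ q) ≤
      volume (closedBall z.2 r) *
        ENNReal.ofReal (q * ((1 / q + 1 / (2 - q)) * N.toReal ^ q * r ^ (2 - q))) := by
  have hq0 : (0 : ℝ) < q := by linarith
  set μC := volume.restrict (pCyl d r z) with hμC
  set Vb := volume (closedBall z.2 r) with hVb
  have hVbtop : Vb ≠ ⊤ := measure_closedBall_lt_top.ne
  have hlc : ∫⁻ w in pCyl d r z, ENNReal.ofReal (‖b w‖ ^ q) =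
      ENNReal.ofReal q * ∫⁻ t in Ioi (0 : ℝ),
        μC {w | t < ‖b w‖} * ENNReal.ofReal (t ^ (q - 1)) :=
    lintegral_rpow_eq_lintegral_meas_lt_mul μC
      (Filter.Eventually.of_forall fun w => norm_nonneg _)
      (hmb.norm.aemeasurable) hq0
  rw [hlc]
  -- pointwise bound on the distribution function for t > 0
  have hdist : ∀ t : ℝ, 0 < t → μC {w | t < ‖b w‖} ≤
      min (ENNReal.ofReal (r ^ 2)) (N ^ (2 : ℝ) * (ENNReal.ofReal t) ^ (-2 : ℝ)) * Vb := by
    intro t ht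
    have hmeas : MeasurableSet {w : ℝ × ESp d | t < ‖b w‖} :=
      measurableSet_lt measurable_const hmb.norm
    rw [hμC, Measure.restrict_apply hmeas]
    have hsub : ({w : ℝ × ESp d | t < ‖b w‖} ∩ pCyl d r z : Set (ℝ × ESp d))
        ≤ᵐ[volume] (({s : ℝ | ENNReal.ofReal t < h s} ∩ Icc z.1 (z.1 + r ^ 2)) ×ˢ
            closedBall z.2 r : Set (ℝ × ESp d)) := by
      filter_upwards [hab] with w hw hwmem
      obtain ⟨hw1, hw2⟩ := hwmem
      have h1 : ENNReal.ofReal t < h w.1 := by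
        refine lt_of_lt_of_le ?_ hw
        rw [← enorm_eq_nnnorm, ← ofReal_norm]
        exact (ENNReal.ofReal_lt_ofReal_iff (lt_trans ht hw1)).mpr hw1
      rw [pCyl_eq] at hw2
      exact ⟨⟨h1, hw2.1⟩, hw2.2⟩
    refine le_trans (measure_mono_ae hsub) ?_
    rw [Measure.volume_eq_prod, Measure.prod_prod]
    refine mul_le_mul_left ?_ _
    refine le_min ?_ ?_
    · refine le_trans (measure_mono inter_subset_right) ?_
      rw [Real.volume_Icc, add_sub_cancel_left]
    · exact le_trans (measure_mono inter_subset_left) (tail_bound hN ht)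
  have hmono : ∫⁻ t in Ioi (0 : ℝ), μC {w | t < ‖b w‖} * ENNReal.ofReal (t ^ (q - 1))
      ≤ ∫⁻ t in Ioi (0 : ℝ),
          Vb * (min (ENNReal.ofReal (r ^ 2)) (N ^ (2 : ℝ) * (ENNReal.ofReal t) ^ (-2 : ℝ)) *
            ENNReal.ofReal (t ^ (q - 1))) := by
    refine lintegral_mono_ae ?_
    filter_upwards [ae_restrict_mem measurableSet_Ioi] with t ht
    calc μC {w | t < ‖b w‖} * ENNReal.ofReal (t ^ (q - 1))
        ≤ min (ENNReal.ofReal (r ^ 2)) (N ^ (2 : ℝ) * (ENNReal.ofReal t) ^ (-2 : ℝ)) * Vb *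
          ENNReal.ofReal (t ^ (q - 1)) := mul_le_mul_left (hdist t ht) _
      _ = Vb * (min (ENNReal.ofReal (r ^ 2)) (N ^ (2 : ℝ) * (ENNReal.ofReal t) ^ (-2 : ℝ)) *
          ENNReal.ofReal (t ^ (q - 1))) := by ring
  calc ENNReal.ofReal q * ∫⁻ t in Ioi (0 : ℝ),
        μC {w | t < ‖b w‖} * ENNReal.ofReal (t ^ (q - 1))
      ≤ ENNReal.ofReal q * ∫⁻ t in Ioi (0 : ℝ),
        Vb * (min (ENNReal.ofReal (r ^ 2)) (N ^ (2 : ℝ) * (ENNReal.ofReal t) ^ (-2 : ℝ)) *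
          ENNReal.ofReal (t ^ (q - 1))) := mul_le_mul_right hmono _
    _ = ENNReal.ofReal q * (Vb * ∫⁻ t in Ioi (0 : ℝ),
        min (ENNReal.ofReal (r ^ 2)) (N ^ (2 : ℝ) * (ENNReal.ofReal t) ^ (-2 : ℝ)) *
          ENNReal.ofReal (t ^ (q - 1))) := by
        rw [lintegral_const_mul' _ _ hVbtop]
    _ ≤ ENNReal.ofReal q * (Vb *
        ENNReal.ofReal ((1 / q + 1 / (2 - q)) * N.toReal ^ q * r ^ (2 - q))) := by
        exact mul_le_mul_right (mul_le_mul_right (key_integral q hq1 hq2 hr hNtop) _) _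
    _ = Vb * ENNReal.ofReal (q * ((1 / q + 1 / (2 - q)) * N.toReal ^ q * r ^ (2 - q))) := by
        rw [ENNReal.ofReal_mul hq0.le]; ring

/-- if `|b(t,x)| ≤ h(t)` with `h` in weak-`L²(ℝ)` (with weak norm `N`), then
`b ∈ E_q` for `1 < q < 2` with `‖b‖_{E_q} ≤ c N`, `c = c(q)`. -/
theorem weakL2_time_subset_morreyE (q : ℝ) (hq1 : 1 < q) (hq2 : q < 2) :
    ∃ c : ℝ, 0 < c ∧ ∀ (d : ℕ), 1 ≤ d →
      ∀ (h : ℝ → ℝ≥0∞) (b : ℝ × ESp d → ESp d) (N : ℝ≥0∞), Measurable h →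
      N = (⨆ (lam : ℝ) (_ : 0 < lam),
            ENNReal.ofReal lam * (volume {t : ℝ | ENNReal.ofReal lam < h t}) ^ ((1 : ℝ) / 2)) →
      N ≠ ⊤ → Measurable b →
      (∀ᵐ z : ℝ × ESp d, (‖b z‖₊ : ℝ≥0∞) ≤ h z.1) →
      LocallyIntegrable (fun z => ‖b z‖ ^ q) volume ∧
      morreyE d q (fun z => (‖b z‖₊ : ℝ≥0∞)) ≤ ENNReal.ofReal c * N := by
  have hq0 : (0 : ℝ) < q := by linarith
  have h2q : (0 : ℝ) < 2 - q := by linarith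
  set A : ℝ := q * (1 / q + 1 / (2 - q)) with hA
  have hApos : 0 < A := by
    have : 0 < 1 / q + 1 / (2 - q) := by positivity
    positivity
  refine ⟨A ^ (1 / q), Real.rpow_pos_of_pos hApos _, ?_⟩
  intro d hd h b N hmh hN hNtop hmb hab
  have hnt : Nontrivial (ESp d) := by
    refine Module.nontrivial_of_finrank_pos (R := ℝ) ?_
    rw [finrank_euclideanSpace_fin]; omega
  constructor
  · -- Local integrability
    rw [locallyIntegrable_iff]
    intro K hK
    obtain ⟨R, hRpos, hKR⟩ := hK.isBounded.subset_closedBall_lt 0 (0 : ℝ × ESp d)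
    set r : ℝ := 2 * R + 2 with hrdef
    have hrpos : 0 < r := by positivity
    have hKc : K ⊆ pCyl d r (-R, 0) := by
      intro w hw
      have := hKR hw
      rw [mem_closedBall, Prod.dist_eq] at this
      simp only [Prod.fst_zero, Prod.snd_zero, dist_zero_right] at this
      have h1 : ‖w.1‖ ≤ R := le_trans (le_max_left _ _) this
      have h2 : ‖w.2‖ ≤ R := le_trans (le_max_right _ _) this
      rw [Real.norm_eq_abs, abs_le] at h1
      refine ⟨h1.1, ?_, ?_⟩
      · have : r ^ 2 ≥ 2 * R := by nlinarith
        simp only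
        nlinarith [h1.2]
      · simp only [dist_zero_right]
        nlinarith [h2]
    refine IntegrableOn.mono_set ?_ hKc
    have hmeas : Measurable fun w : ℝ × ESp d => ‖b w‖ ^ q := by fun_prop
    constructor
    · exact hmeas.aestronglyMeasurable.restrict
    · rw [hasFiniteIntegral_iff_ofReal]
      · refine lt_of_le_of_lt (cylinder_bound q hq1 hq2 d h b N hN hNtop hmb hab hrpos _) ?_
        exact ENNReal.mul_lt_top measure_closedBall_lt_top ENNReal.ofReal_lt_top
      · exact Filter.Eventually.of_forall fun w => Real.rpow_nonneg (norm_nonneg _) _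
  · -- Morrey bound
    rw [morreyE]
    refine iSup_le fun r => iSup_le fun hr => iSup_le fun z => ?_
    set Vb := volume (closedBall z.2 r) with hVb
    have hVbtop : Vb ≠ ⊤ := measure_closedBall_lt_top.ne
    have hVb0 : Vb ≠ 0 := (measure_closedBall_pos volume z.2 hr).ne'
    have hint : ∫⁻ w in pCyl d r z, ((‖b w‖₊ : ℝ≥0∞)) ^ q =
        ∫⁻ w in pCyl d r z, ENNReal.ofReal (‖b w‖ ^ q) := by
      refine lintegral_congr fun w => ?_
      rw [← enorm_eq_nnnorm, ← ofReal_norm, ENNReal.ofReal_rpow_of_nonneg (norm_nonneg _) hq0.le]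
    have hbound := cylinder_bound q hq1 hq2 d h b N hN hNtop hmb hab hr z
    set K : ℝ := q * ((1 / q + 1 / (2 - q)) * N.toReal ^ q * r ^ (2 - q)) with hK
    have hKnn : 0 ≤ K := by
      have : (0 : ℝ) ≤ N.toReal ^ q := Real.rpow_nonneg ENNReal.toReal_nonneg _
      have : (0 : ℝ) ≤ r ^ (2 - q) := Real.rpow_nonneg hr.le _
      positivity
    have hvol : volume (pCyl d r z) = ENNReal.ofReal (r ^ 2) * Vb := volume_pCyl d r z
    have hr2pos : (0 : ℝ) < r ^ 2 := by positivity
    have hr20 : ENNReal.ofReal (r ^ 2) ≠ 0 := by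
      simp [ENNReal.ofReal_eq_zero, not_le, hr2pos, hr.ne']
    have key : (volume (pCyl d r z))⁻¹ * ∫⁻ w in pCyl d r z, ((‖b w‖₊ : ℝ≥0∞)) ^ q ≤
        ENNReal.ofReal ((r ^ 2)⁻¹ * K) := by
      rw [hint, hvol]
      calc (ENNReal.ofReal (r ^ 2) * Vb)⁻¹ * ∫⁻ w in pCyl d r z, ENNReal.ofReal (‖b w‖ ^ q)
          ≤ (ENNReal.ofReal (r ^ 2) * Vb)⁻¹ * (Vb * ENNReal.ofReal K) :=
            mul_le_mul_right hbound _
        _ = (ENNReal.ofReal (r ^ 2))⁻¹ * (Vb⁻¹ * Vb) * ENNReal.ofReal K := by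
            rw [ENNReal.mul_inv (Or.inl hr20) (Or.inl ENNReal.ofReal_ne_top)]
            ring
        _ = ENNReal.ofReal ((r ^ 2)⁻¹ * K) := by
            rw [ENNReal.inv_mul_cancel hVb0 hVbtop, mul_one,
              ← ENNReal.ofReal_inv_of_pos hr2pos, ← ENNReal.ofReal_mul (by positivity)]
    calc ENNReal.ofReal r *
          ((volume (pCyl d r z))⁻¹ * ∫⁻ w in pCyl d r z, ((‖b w‖₊ : ℝ≥0∞)) ^ q) ^ (1 / q)
        ≤ ENNReal.ofReal r * (ENNReal.ofReal ((r ^ 2)⁻¹ * K)) ^ (1 / q) :=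
          mul_le_mul_right (ENNReal.rpow_le_rpow key (by positivity)) _
      _ = ENNReal.ofReal (r * ((r ^ 2)⁻¹ * K) ^ (1 / q)) := by
          rw [ENNReal.ofReal_rpow_of_nonneg (by positivity) (by positivity),
            ← ENNReal.ofReal_mul hr.le]
      _ = ENNReal.ofReal (A ^ (1 / q)) * N := by
          have hreal : r * ((r ^ 2)⁻¹ * K) ^ (1 / q) = A ^ (1 / q) * N.toReal := by
            have e0 : (r ^ 2)⁻¹ * K = A * N.toReal ^ q * r ^ (-q : ℝ) := by
              have : (r ^ 2)⁻¹ = r ^ (-2 : ℝ) := by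
                rw [show (-2 : ℝ) = -((2 : ℕ) : ℝ) by norm_num, Real.rpow_neg hr.le,
                  Real.rpow_natCast]
              rw [this, hK, hA]
              rw [show r ^ (2 - q) = r ^ (2 - q) from rfl]
              have : r ^ (2 - q) * r ^ (-2 : ℝ) = r ^ (-q : ℝ) := by
                rw [← Real.rpow_add hr]; ring_nf
              calc r ^ (-2 : ℝ) * (q * ((1 / q + 1 / (2 - q)) * N.toReal ^ q * r ^ (2 - q)))
                  = q * (1 / q + 1 / (2 - q)) * N.toReal ^ q * (r ^ (2 - q) * r ^ (-2 : ℝ)) := by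
                    ring
                _ = q * (1 / q + 1 / (2 - q)) * N.toReal ^ q * r ^ (-q : ℝ) := by rw [this]
            rw [e0]
            have hNnn : (0 : ℝ) ≤ N.toReal := ENNReal.toReal_nonneg
            have hNq : (0 : ℝ) ≤ N.toReal ^ q := Real.rpow_nonneg hNnn _
            rw [Real.mul_rpow (by positivity) (Real.rpow_nonneg hr.le _),
              Real.mul_rpow hApos.le hNq]
            have e1 : (N.toReal ^ q) ^ (1 / q : ℝ) = N.toReal := by
              rw [← Real.rpow_mul hNnn, mul_one_div_cancel hq0.ne', Real.rpow_one]
            have e2 : (r ^ (-q : ℝ)) ^ (1 / q : ℝ) = r⁻¹ := by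
              rw [← Real.rpow_mul hr.le]
              rw [show -q * (1 / q) = -1 by field_simp, Real.rpow_neg_one]
            rw [e1, e2]
            field_simp
          rw [hreal, ENNReal.ofReal_mul (Real.rpow_nonneg hApos.le _),
            ENNReal.ofReal_toReal hNtop]
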